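/- arXiv:1504.02679 — 2 statements merged into one kernel-verified Lean document; each statement's English description precedes it below -/
import Mathlib

section
/- Every element (a,f) of Ĝ²(n) factors uniquely as (a,f) = (b,g)·(I,h) where (b,g) ∈ G²(n) (i.e. g is symmetric) and h is antisymmetric; explicitly b = a, g = f_s, and h = a⁻¹ ∘ f_a. -/
/-! Right multiplication by `(I, h)` sends `(a, g)` to `(a, a ∘ h + g)`. Since `a ∘ h` is
antisymmetric whenever `h` is, the factorization amounts to the unique splitting of `f` into
its symmetric part `g = f_s` and antisymmetric part `a ∘ h = f_a`. -/

abbrev V (n : ℕ) : Type := Fin n → ℝ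

/-- Bilinear maps `ℝ^n × ℝ^n → ℝ^n`. -/
abbrev L2 (n : ℕ) := V n →ₗ[ℝ] V n →ₗ[ℝ] V n

/-- `GL(n,ℝ)`, realized as the invertible linear endomorphisms of `ℝ^n`. -/
abbrev GLn (n : ℕ) := (V n →ₗ[ℝ] V n)ˣ

/-- The multiplication `(a,f)(a',f') = (a·a', a ∘ f' + f(a',a'))` of `Ĝ²(n)`. -/
noncomputable def gmul {n : ℕ} (p q : GLn n × L2 n) : GLn n × L2 n :=
  (p.1 * q.1,
    q.2.compr₂ (p.1 : V n →ₗ[ℝ] V n) +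
      p.2.compl₁₂ (q.1 : V n →ₗ[ℝ] V n) (q.1 : V n →ₗ[ℝ] V n))

/-- The symmetric part `f_s = (f + fᵗ)/2`. -/
noncomputable def symPart {n : ℕ} (f : L2 n) : L2 n := (1/2 : ℝ) • (f + f.flip)

/-- The antisymmetric part `f_a = (f - fᵗ)/2`. -/
noncomputable def asymPart {n : ℕ} (f : L2 n) : L2 n := (1/2 : ℝ) • (f - f.flip)

section

variable {R M N P : Type*} [CommRing R] [AddCommGroup M] [AddCommGroup N] [AddCommGroup P]
  [Module R M] [Module R N] [Module R P]

theorem LinearMap.compr₂_compr₂_inv (a : (N →ₗ[R] N)ˣ) (h : M →ₗ[R] M →ₗ[R] N) :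
    (h.compr₂ (a : N →ₗ[R] N)).compr₂ ((a⁻¹ : (N →ₗ[R] N)ˣ) : N →ₗ[R] N) = h := by
  refine LinearMap.ext₂ fun u v => ?_
  rw [compr₂_apply, compr₂_apply, ← Module.End.mul_apply, Units.inv_mul, Module.End.one_apply]

theorem LinearMap.compr₂_inv_compr₂ (a : (N →ₗ[R] N)ˣ) (h : M →ₗ[R] M →ₗ[R] N) :
    (h.compr₂ ((a⁻¹ : (N →ₗ[R] N)ˣ) : N →ₗ[R] N)).compr₂ (a : N →ₗ[R] N) = h := by
  simpa using compr₂_compr₂_inv a⁻¹ h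

theorem LinearMap.compr₂_antisymm {h : M →ₗ[R] M →ₗ[R] N} (hh : ∀ u v, h u v = -h v u)
    (b : N →ₗ[R] P) (u v : M) : h.compr₂ b u v = -h.compr₂ b v u := by
  simp only [compr₂_apply, hh u v, map_neg]

end

section

variable {n : ℕ}

theorem gmul_one_right (a : GLn n) (g h : L2 n) :
    gmul (a, g) (1, h) = (a, h.compr₂ (a : V n →ₗ[ℝ] V n) + g) := by
  simp only [gmul, mul_one, Units.val_one, Module.End.one_eq_id, LinearMap.compl₁₂_id_id]

theorem asymPart_add_symPart (f : L2 n) : asymPart f + symPart f = f := by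
  refine LinearMap.ext₂ fun u v => ?_
  simp only [asymPart, symPart, LinearMap.add_apply, LinearMap.smul_apply, LinearMap.sub_apply,
    LinearMap.flip_apply]
  module

theorem symPart_antisymm_add_symm {k g : L2 n} (hk : ∀ u v, k u v = -k v u)
    (hg : ∀ u v, g u v = g v u) : symPart (k + g) = g := by
  refine LinearMap.ext₂ fun u v => ?_
  simp only [symPart, LinearMap.add_apply, LinearMap.smul_apply, LinearMap.flip_apply,
    hk v u, hg v u]
  module

theorem asymPart_antisymm_add_symm {k g : L2 n} (hk : ∀ u v, k u v = -k v u)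
    (hg : ∀ u v, g u v = g v u) : asymPart (k + g) = k := by
  refine LinearMap.ext₂ fun u v => ?_
  simp only [asymPart, LinearMap.add_apply, LinearMap.sub_apply, LinearMap.smul_apply,
    LinearMap.flip_apply, hk v u, hg v u]
  module

end

/-- every `(a,f) ∈ Ĝ²(n)` factors uniquely as `(a,f) = (b,g)·(I,h)` with `g`
symmetric and `h` antisymmetric; explicitly `b = a`, `g = f_s` and `h = a⁻¹ ∘ f_a`. -/
theorem Ghat_factorization (n : ℕ) (a : GLn n) (f : L2 n) :
    gmul (a, symPart f) ((1 : GLn n), (asymPart f).compr₂ ((a⁻¹ : GLn n) : V n →ₗ[ℝ] V n))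
      = (a, f) ∧
    ∀ (b : GLn n) (g h : L2 n), (∀ u v, g u v = g v u) → (∀ u v, h u v = - h v u) →
      gmul (b, g) ((1 : GLn n), h) = (a, f) →
      b = a ∧ g = symPart f ∧ h = (asymPart f).compr₂ ((a⁻¹ : GLn n) : V n →ₗ[ℝ] V n) := by
  refine ⟨?_, fun b g h hg hh heq => ?_⟩
  · rw [gmul_one_right, LinearMap.compr₂_inv_compr₂, asymPart_add_symPart]
  · rw [gmul_one_right, Prod.mk.injEq] at heq
    obtain ⟨rfl, rfl⟩ := heq
    have hah := LinearMap.compr₂_antisymm hh (b : V n →ₗ[ℝ] V n)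
    refine ⟨rfl, (symPart_antisymm_add_symm hah hg).symm, ?_⟩
    rw [asymPart_antisymm_add_symm hah hg, LinearMap.compr₂_compr₂_inv]
end

section
/- The set A₂(n) of elements (I,h) ∈ Ĝ²(n) with h antisymmetric bilinear is a normal subgroup of Ĝ²(n). -/
/-- The candidate inverse `(a⁻¹, -a⁻¹ ∘ f(a⁻¹,a⁻¹))` of `(a,f)`. -/
noncomputable def ginv {n : ℕ} (p : GLn n × L2 n) : GLn n × L2 n :=
  (p.1⁻¹,
    -((p.2.compl₁₂ (p.1⁻¹ : GLn n) (p.1⁻¹ : GLn n)).compr₂ ((p.1⁻¹ : GLn n) : V n →ₗ[ℝ] V n)))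

/-- `A₂(n)`: the set of elements `(I,h)` of `Ĝ²(n)` with `h` antisymmetric. -/
def A2set (n : ℕ) : Set (GLn n × L2 n) :=
  {p | p.1 = 1 ∧ ∀ u v, p.2 u v = - p.2 v u}

/-! On pairs `(I, h)` the product is `(I, h + h')`, so `A₂(n)` is just the additive group of
antisymmetric bilinear maps. Conjugation by `(a, f)` sends `(I, h)` to `(I, a ∘ h(a⁻¹, a⁻¹))`, the
`f`-terms of `(a, f)` and of its inverse cancelling, and this map is again antisymmetric. -/

namespace LinearMap

variable {R M M' N P : Type*} [CommSemiring R] [AddCommMonoid M] [AddCommMonoid M']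
  [AddCommGroup N] [AddCommGroup P] [Module R M] [Module R M'] [Module R N] [Module R P]

def IsAntisymmetric (h : M →ₗ[R] M →ₗ[R] N) : Prop :=
  ∀ u v, h u v = -h v u

namespace IsAntisymmetric

variable {f g : M →ₗ[R] M →ₗ[R] N}

theorem zero : (0 : M →ₗ[R] M →ₗ[R] N).IsAntisymmetric := fun _ _ => by simp

theorem add (hf : f.IsAntisymmetric) (hg : g.IsAntisymmetric) : (f + g).IsAntisymmetric :=
  fun u v => by simp only [add_apply, hf u v, hg u v, neg_add]

theorem neg (hf : f.IsAntisymmetric) : (-f).IsAntisymmetric :=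
  fun u v => by simp only [neg_apply, hf u v]

theorem compr₂ (hf : f.IsAntisymmetric) (a : N →ₗ[R] P) : (f.compr₂ a).IsAntisymmetric :=
  fun u v => by simp only [compr₂_apply, hf u v, map_neg]

theorem compl₁₂ (hf : f.IsAntisymmetric) (b : M' →ₗ[R] M) : (f.compl₁₂ b b).IsAntisymmetric :=
  fun u v => hf (b u) (b v)

end IsAntisymmetric

end LinearMap

open LinearMap

section

variable {n : ℕ}

theorem mk_one_mem_A2set {h : L2 n} : ((1 : GLn n), h) ∈ A2set n ↔ h.IsAntisymmetric :=
  and_iff_right rfl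

theorem gmul_one_one (f g : L2 n) : gmul (1, f) (1, g) = (1, g + f) := by
  simp only [gmul, Units.val_one, Module.End.one_eq_id, compr₂_id, compl₁₂_id_id, mul_one]

theorem gmul_one_neg (f : L2 n) : gmul (1, f) (1, -f) = (1, 0) := by
  rw [gmul_one_one, neg_add_cancel f]

theorem gmul_neg_one (f : L2 n) : gmul (1, -f) (1, f) = (1, 0) := by
  rw [gmul_one_one, add_neg_cancel f]

theorem gmul_gmul_ginv (p : GLn n × L2 n) (h : L2 n) :
    gmul (gmul p (1, h)) (ginv p) =
      (1, (h.compl₁₂ (p.1⁻¹ : GLn n).val (p.1⁻¹ : GLn n).val).compr₂ p.1.val) := by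
  obtain ⟨a, f⟩ := p
  have ha : ∀ x, a.val (a⁻¹.val x) = x := fun x => LinearMap.congr_fun a.mul_inv x
  refine Prod.ext (by simp [gmul, ginv]) ?_
  ext u v
  simp [gmul, ginv, ha]

end

/-- `A₂(n)` is a normal subgroup of `Ĝ²(n)`. -/
theorem A2_normal_subgroup (n : ℕ) :
    ((1 : GLn n), (0 : L2 n)) ∈ A2set n ∧
    (∀ p q, p ∈ A2set n → q ∈ A2set n → gmul p q ∈ A2set n) ∧
    (∀ p ∈ A2set n, ∃ q ∈ A2set n,
      gmul p q = ((1 : GLn n), (0 : L2 n)) ∧ gmul q p = ((1 : GLn n), (0 : L2 n))) ∧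
    (∀ p : GLn n × L2 n, ∀ s ∈ A2set n, gmul (gmul p s) (ginv p) ∈ A2set n) := by
  refine ⟨mk_one_mem_A2set.2 IsAntisymmetric.zero, ?_, ?_, ?_⟩
  · rintro ⟨_, f⟩ ⟨_, g⟩ ⟨rfl, hf⟩ ⟨rfl, hg⟩
    rw [gmul_one_one]
    exact mk_one_mem_A2set.2 (IsAntisymmetric.add hg hf)
  · rintro ⟨_, f⟩ ⟨rfl, hf⟩
    exact ⟨(1, -f), mk_one_mem_A2set.2 (IsAntisymmetric.neg hf), gmul_one_neg f, gmul_neg_one f⟩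
  · rintro p ⟨_, h⟩ ⟨rfl, hh⟩
    rw [gmul_gmul_ginv]
    exact mk_one_mem_A2set.2 ((IsAntisymmetric.compl₁₂ hh _).compr₂ _)
end
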